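/- In the LLX/SCX algorithm, a marked Data-record never points to an SCX-record with state Aborted (property P3), a marked Data-record remains marked forever (P2), and each change of the des field of a Data-record installs a value never previously stored there (P4). Consequently, if an LLX observes at time t1 that a Data-record r points to SCX-record d with state Aborted, and at time t2 > t1 observes that r is marked, then r.des must have changed between t1 and t2, and by P4 the value of r.des at any time after the change differs from its value at t1; so a subsequent read of r.des at time t3 > t2 returns a value different from d. -/
import Mathlib

/-- LLX/SCX properties: a marked Data-record stays marked (P2), a marked
Data-record never points to an Aborted SCX-record (P3), and each change of the
des field installs a never-before-stored value (P4).  If an LLX sees that r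
points to d with state Aborted at t1 and that r is marked at t2 > t1, then
r.des changed in [t1, t2), and a read of r.des at any t3 > t2 returns a value
different from d = g t1. -/
theorem llx_des_changed {D S : Type}
    (g : ℕ → D) (m : ℕ → Bool) (state : D → S) (Aborted : S)
    (P2 : ∀ s t, s ≤ t → m s = true → m t = true)
    (P3 : ∀ t, m t = true → state (g t) ≠ Aborted)
    (P4 : ∀ t, g (t + 1) ≠ g t → ∀ s ≤ t, g (t + 1) ≠ g s)
    (t1 t2 t3 : ℕ) (h12 : t1 < t2) (h23 : t2 < t3)
    (hAb : state (g t1) = Aborted)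
    (hm : m t2 = true) :
    (∃ t, t1 ≤ t ∧ t < t2 ∧ g (t + 1) ≠ g t) ∧ g t3 ≠ g t1 := by
  have hne : g t2 ≠ g t1 := fun h => P3 t2 hm (h ▸ hAb)
  have hafter : ∀ t, t2 ≤ t → g t ≠ g t1 := by
    intro t ht
    induction t with
    | zero => omega
    | succ n ih =>
      rcases Nat.lt_or_ge n t2 with h | h
      · have : t2 = n + 1 := by omega
        exact this ▸ hne
      · by_cases hch : g (n + 1) = g n
        · exact hch ▸ ih h
        · exact P4 n hch t1 (by omega)
  refine ⟨?_, hafter t3 (by omega)⟩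
  by_contra hc
  push_neg at hc
  have hconst : ∀ t, t1 ≤ t → t ≤ t2 → g t = g t1 := by
    intro t ht ht2
    induction t with
    | zero =>
      have : t1 = 0 := by omega
      rw [this]
    | succ n ih =>
      rcases Nat.lt_or_ge n t1 with h | h
      · have : t1 = n + 1 := by omega
        rw [this]
      · rw [hc n h (by omega)]
        exact ih h (by omega)
  exact hne (hconst t2 h12.le le_rfl)
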